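/- Let ν be a partition, fix an addable corner of ν at position (α,β) (row α, column β), so its weight is A = t^α·q^β, and let μ = ν together with that cell. Then in ℚ(q,t): ∏_{s∈C_{μν}} (t^{l_ν(s)}−q^{a_ν(s)+1})/(t^{l_μ(s)}−q^{a_μ(s)+1}) = t^{−α} · ∏_{R}(A − qt·R) / ∏_{A'}(A − A'), where the numerator product runs over the weights R of the removable corners of ν whose row index is strictly less than α, the denominator product runs over the weights A' of the addable corners of ν whose row index is strictly less than α, and these two sets of corners have equal cardinality. -/

import Mathlib

open scoped Classical
open PowerSeries

noncomputable section

abbrev K := FractionRing (MvPolynomial (Fin 2) ℚ)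

def q : K := algebraMap (MvPolynomial (Fin 2) ℚ) K (MvPolynomial.X 0)
def t : K := algebraMap (MvPolynomial (Fin 2) ℚ) K (MvPolynomial.X 1)

/-- the weight of a cell `(i,j)` (row `i`, column `j`) is `t^i * q^j` -/
def w (c : ℕ × ℕ) : K := t ^ c.1 * q ^ c.2

/-- `B_μ = Σ_{c ∈ μ} w(c)` -/
def Bsum (μ : YoungDiagram) : K := ∑ c ∈ μ.cells, w c

/-- a removable corner: a cell of `μ` whose removal leaves a Young diagram -/
def IsRemovable (μ : YoungDiagram) (c : ℕ × ℕ) : Prop :=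
  c ∈ μ ∧ IsLowerSet (↑(μ.cells.erase c) : Set (ℕ × ℕ))

/-- an addable corner: a cell not in `μ` whose addition gives a Young diagram -/
def IsAddable (μ : YoungDiagram) (c : ℕ × ℕ) : Prop :=
  c ∉ μ ∧ IsLowerSet (↑(insert c μ.cells) : Set (ℕ × ℕ))

/-- the arm of a cell: number of cells of `μ` strictly east of it in its row -/
def arm (μ : YoungDiagram) (c : ℕ × ℕ) : ℕ :=
  (μ.cells.filter fun d => d.1 = c.1 ∧ c.2 < d.2).card

/-- the leg of a cell: number of cells of `μ` strictly north of it in its column -/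
def leg (μ : YoungDiagram) (c : ℕ × ℕ) : ℕ :=
  (μ.cells.filter fun d => d.2 = c.2 ∧ c.1 < d.1).card

/-!
Write `λ` for the row lengths of `ν`, so that `λ α = β < λ i` for `i < α`. The cell `(i, β)` of
the column contributes `(t^(α-i-1) - q^e) / (t^(α-i) - q^e)` with `e = λ i - β`, and this is
`t⁻¹ · N i / D i` for `N i = A - w (i+1, λ i)` and `D i = A - w (i, λ i)`. If `λ (i+1) = λ i`
then `N i = D (i+1)`, so in `∏ N / ∏ D` everything cancels except `N i` at the last row `i` of each
run of rows of equal length, where `(i, λ i - 1)` is a removable corner `R` with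
`q t R = w (i+1, λ i)`, and `D i` at the first row `i` of each run, where `(i, λ i)` is an addable
corner. Both kinds of rows are in bijection with the runs, whence the equality of cardinalities.
-/

open Finset

lemma t_ne_zero : t ≠ 0 :=
  (map_ne_zero_iff _ (IsFractionRing.injective _ K)).mpr (MvPolynomial.X_ne_zero 1)

lemma q_ne_zero : q ≠ 0 :=
  (map_ne_zero_iff _ (IsFractionRing.injective _ K)).mpr (MvPolynomial.X_ne_zero 0)

lemma w_eq_algebraMap_monomial (c : ℕ × ℕ) :
    w c = algebraMap (MvPolynomial (Fin 2) ℚ) K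
      (MvPolynomial.monomial (Finsupp.single 1 c.1 + Finsupp.single 0 c.2) 1) := by
  rw [← one_mul (1 : ℚ), ← MvPolynomial.monomial_mul, ← MvPolynomial.X_pow_eq_monomial,
    ← MvPolynomial.X_pow_eq_monomial, map_mul, map_pow, map_pow, w, t, q]

lemma w_injective : Function.Injective w := by
  intro c d h
  rw [w_eq_algebraMap_monomial, w_eq_algebraMap_monomial] at h
  have h := (MvPolynomial.monomial_left_inj one_ne_zero).mp (IsFractionRing.injective _ K h)
  have h1 := DFunLike.congr_fun h 1
  have h0 := DFunLike.congr_fun h 0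
  simp only [Finsupp.coe_add, Pi.add_apply, Finsupp.single_eq_same, Finsupp.single_eq_of_ne,
    one_ne_zero, zero_ne_one, ne_eq, not_false_eq_true, add_zero, zero_add] at h1 h0
  exact Prod.ext h1 h0

lemma q_mul_t_mul_w (i j : ℕ) : q * t * w (i, j) = w (i + 1, j + 1) := by
  simp only [w]
  ring

lemma column_factor (i j k e : ℕ) :
    (t ^ k - q ^ (e + 1)) / (t ^ (k + 1) - q ^ (e + 1)) =
      t⁻¹ * ((w (i + k + 1, j) - w (i + 1, j + e + 1)) /
        (w (i + k + 1, j) - w (i, j + e + 1))) := by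
  have hden : t ^ (k + 1) - q ^ (e + 1) ≠ 0 := by
    simpa [w, sub_eq_zero] using w_injective.ne (show (k + 1, 0) ≠ (0, e + 1) by simp)
  have hN : w (i + k + 1, j) - w (i + 1, j + e + 1) =
      t ^ (i + 1) * q ^ j * (t ^ k - q ^ (e + 1)) := by
    simp only [w]
    ring
  have hD : w (i + k + 1, j) - w (i, j + e + 1) =
      t ^ i * q ^ j * (t ^ (k + 1) - q ^ (e + 1)) := by
    simp only [w]
    ring
  rw [hN, hD]
  field_simp [t_ne_zero, q_ne_zero]
  ring

lemma isLowerSet_insert_iff {α : Type*} [PartialOrder α] {s : Set α} {a : α} (hs : IsLowerSet s) :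
    IsLowerSet (insert a s) ↔ ∀ b < a, b ∈ s := by
  refine ⟨fun h b hb => ?_, fun h b c hcb hc => ?_⟩
  · exact (h hb.le (Set.mem_insert a s)).resolve_left hb.ne
  · rcases hc with rfl | hc
    · rcases hcb.eq_or_lt with rfl | hlt
      · exact Set.mem_insert _ s
      · exact Set.mem_insert_of_mem _ (h _ hlt)
    · exact Set.mem_insert_of_mem _ (hs hcb hc)

lemma isLowerSet_diff_singleton_iff {α : Type*} [PartialOrder α] {s : Set α} {a : α}
    (hs : IsLowerSet s) : IsLowerSet (s \ {a}) ↔ ∀ b ∈ s, a ≤ b → b = a := by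
  refine ⟨fun h b hb hab => ?_, hs.erase⟩
  by_contra hba
  exact (h hab ⟨hb, hba⟩).2 rfl

namespace YoungDiagram

variable (ν : YoungDiagram)

lemma isRemovable_iff (i j : ℕ) :
    IsRemovable ν (i, j) ↔ (i, j) ∈ ν ∧ (i, j + 1) ∉ ν ∧ (i + 1, j) ∉ ν := by
  rw [IsRemovable, Finset.coe_erase, isLowerSet_diff_singleton_iff ν.isLowerSet]
  refine and_congr_right fun _ => ⟨fun h => ⟨fun hm => ?_, fun hm => ?_⟩, ?_⟩
  · simpa using h _ hm (by simp)
  · simpa using h _ hm (by simp)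
  · rintro ⟨hr, hu⟩ ⟨k, l⟩ hm ⟨hik, hjl⟩
    simp only at hik hjl
    by_contra hne
    rcases Nat.lt_or_ge j l with hl | hl
    · exact hr (ν.up_left_mem hik hl hm)
    · exact hu (ν.up_left_mem (lt_of_le_of_ne hik (by grind)) hjl hm)

lemma isAddable_iff (i j : ℕ) :
    IsAddable ν (i, j) ↔ (i, j) ∉ ν ∧ (j = 0 ∨ (i, j - 1) ∈ ν) ∧ (i = 0 ∨ (i - 1, j) ∈ ν) := by
  rw [IsAddable, Finset.coe_insert, isLowerSet_insert_iff ν.isLowerSet]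
  refine and_congr_right fun _ => ⟨fun h => ⟨?_, ?_⟩, ?_⟩
  · rcases Nat.eq_zero_or_pos j with hj | hj
    · exact .inl hj
    · exact .inr (h _ (Prod.mk_lt_mk_of_le_of_lt le_rfl (Nat.sub_lt hj one_pos)))
  · rcases Nat.eq_zero_or_pos i with hi | hi
    · exact .inl hi
    · exact .inr (h _ (Prod.mk_lt_mk_of_lt_of_le (Nat.sub_lt hi one_pos) le_rfl))
  · rintro ⟨hl, hd⟩ ⟨k, l⟩ hlt
    obtain ⟨hki, hlj⟩ := Prod.mk_le_mk.mp hlt.le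
    rcases Nat.lt_or_ge l j with hl' | hl'
    · exact ν.up_left_mem hki (Nat.le_sub_one_of_lt hl') (hl.resolve_left (by omega))
    · have hk : k < i := lt_of_le_of_ne hki fun h => hlt.ne (by simp [h]; omega)
      exact ν.up_left_mem (Nat.le_sub_one_of_lt hk) hlj (hd.resolve_left (by omega))

lemma isRemovable_iff_rowLen (i j : ℕ) :
    IsRemovable ν (i, j) ↔ ν.rowLen i = j + 1 ∧ ν.rowLen (i + 1) < ν.rowLen i := by
  simp only [isRemovable_iff, mem_iff_lt_rowLen]
  omega

lemma isAddable_iff_rowLen (i j : ℕ) :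
    IsAddable ν (i, j) ↔ ν.rowLen i = j ∧ (i = 0 ∨ ν.rowLen i < ν.rowLen (i - 1)) := by
  simp only [isAddable_iff, mem_iff_lt_rowLen]
  omega

lemma colLen_eq_of_isAddable {i j : ℕ} (h : IsAddable ν (i, j)) : ν.colLen j = i := by
  simp only [isAddable_iff, mem_iff_lt_colLen] at h
  omega

lemma arm_eq (i j : ℕ) : arm ν (i, j) = ν.rowLen i - (j + 1) := by
  have : ν.cells.filter (fun d => d.1 = i ∧ j < d.2) = {i} ×ˢ Ico (j + 1) (ν.rowLen i) := by
    ext ⟨k, l⟩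
    simp only [mem_filter, mem_cells, mem_product, mem_singleton, mem_Ico]
    constructor
    · rintro ⟨hm, rfl, hl⟩
      exact ⟨rfl, hl, mem_iff_lt_rowLen.mp hm⟩
    · rintro ⟨rfl, hl, hm⟩
      exact ⟨mem_iff_lt_rowLen.mpr hm, rfl, hl⟩
  rw [arm, this, card_product, card_singleton, Nat.card_Ico, one_mul]

lemma leg_eq (i j : ℕ) : leg ν (i, j) = ν.colLen j - (i + 1) := by
  have : ν.cells.filter (fun d => d.2 = j ∧ i < d.1) = Ico (i + 1) (ν.colLen j) ×ˢ {j} := by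
    ext ⟨k, l⟩
    simp only [mem_filter, mem_cells, mem_product, mem_singleton, mem_Ico]
    constructor
    · rintro ⟨hm, rfl, hk⟩
      exact ⟨⟨hk, mem_iff_lt_colLen.mp hm⟩, rfl⟩
    · rintro ⟨⟨hk, hm⟩, rfl⟩
      exact ⟨mem_iff_lt_colLen.mpr hm, rfl, hk⟩
  rw [leg, this, card_product, card_singleton, Nat.card_Ico, mul_one]

variable {ν} {μ : YoungDiagram} {α β : ℕ}

lemma mem_of_cells_eq_insert {c : ℕ × ℕ} (hμ : μ.cells = insert c ν.cells) (x : ℕ × ℕ) :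
    x ∈ μ ↔ x = c ∨ x ∈ ν := by
  rw [← mem_cells, hμ, Finset.mem_insert, mem_cells]

lemma rowLen_of_cells_eq_insert (hμ : μ.cells = insert (α, β) ν.cells) {i : ℕ} (hi : i ≠ α) :
    μ.rowLen i = ν.rowLen i := by
  refine eq_of_forall_lt_iff fun j => ?_
  rw [← mem_iff_lt_rowLen, ← mem_iff_lt_rowLen, mem_of_cells_eq_insert hμ]
  simp [hi]

lemma colLen_of_cells_eq_insert (hμ : μ.cells = insert (α, β) ν.cells) (hc : IsAddable ν (α, β)) :
    μ.colLen β = α + 1 := by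
  refine eq_of_forall_lt_iff fun i => ?_
  rw [← mem_iff_lt_colLen, mem_of_cells_eq_insert hμ, mem_iff_lt_colLen,
    colLen_eq_of_isAddable ν hc]
  simp only [Prod.mk.injEq, and_true]
  omega

end YoungDiagram

section Blocks

variable (f : ℕ → ℕ) (n : ℕ)

def blockEnds : Finset ℕ := (range n).filter fun i => f (i + 1) < f i

def blockStarts : Finset ℕ := (range n).filter fun i => i = 0 ∨ f i < f (i - 1)

variable {f n}

lemma map_succ_filter_not_blockEnd (hf : ∀ i < n, f n < f i) :
    ((range n).filter fun i => ¬ f (i + 1) < f i).map (addRightEmbedding 1) =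
      (range n).filter fun i => ¬ (i = 0 ∨ f i < f (i - 1)) := by
  ext m
  simp only [mem_map, mem_filter, mem_range, addRightEmbedding_apply, not_or]
  constructor
  · rintro ⟨i, ⟨hi, hfi⟩, rfl⟩
    have : i + 1 ≠ n := fun h => hfi (h ▸ hf i hi)
    exact ⟨by omega, by omega, by simpa using hfi⟩
  · rintro ⟨hm, hm0, hfm⟩
    exact ⟨m - 1, ⟨by omega, by rwa [Nat.sub_add_cancel (by omega)]⟩, by omega⟩

lemma card_blockEnds (hf : ∀ i < n, f n < f i) : (blockEnds f n).card = (blockStarts f n).card := by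
  have h := congrArg card (map_succ_filter_not_blockEnd hf)
  rw [card_map] at h
  have hE := card_filter_add_card_filter_not (s := range n) (fun i => f (i + 1) < f i)
  have hS := card_filter_add_card_filter_not (s := range n) (fun i => i = 0 ∨ f i < f (i - 1))
  rw [blockEnds, blockStarts]
  omega

lemma prod_mul_prod_blockStarts {M : Type*} [CommMonoid M] (hanti : Antitone f)
    (hf : ∀ i < n, f n < f i) {N D : ℕ → M} (hND : ∀ i, f (i + 1) = f i → N i = D (i + 1)) :
    (∏ i ∈ range n, N i) * ∏ i ∈ blockStarts f n, D i =
      (∏ i ∈ range n, D i) * ∏ i ∈ blockEnds f n, N i := by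
  have hinner : ∏ i ∈ (range n).filter (fun i => ¬ f (i + 1) < f i), N i =
      ∏ i ∈ (range n).filter (fun i => ¬ (i = 0 ∨ f i < f (i - 1))), D i := by
    rw [← map_succ_filter_not_blockEnd hf, prod_map]
    exact prod_congr rfl fun i hi =>
      hND i ((hanti i.le_succ).antisymm (not_lt.mp (mem_filter.mp hi).2))
  rw [← prod_filter_mul_prod_filter_not (range n) (fun i => f (i + 1) < f i),
    ← prod_filter_mul_prod_filter_not (range n) (fun i => i = 0 ∨ f i < f (i - 1)), hinner,
    blockEnds, blockStarts]
  ac_rfl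

end Blocks

namespace YoungDiagram

variable (ν : YoungDiagram) {Rem Add : Finset (ℕ × ℕ)} (n : ℕ)

lemma filter_isRemovable_eq_image (hRem : ∀ x, x ∈ Rem ↔ IsRemovable ν x) :
    Rem.filter (fun r => r.1 < n) = (blockEnds ν.rowLen n).image fun i => (i, ν.rowLen i - 1) := by
  ext ⟨i, j⟩
  simp only [mem_filter, hRem, isRemovable_iff_rowLen, blockEnds, mem_image, mem_range,
    Prod.mk.injEq]
  constructor
  · rintro ⟨⟨hj, hlt⟩, hi⟩
    exact ⟨i, ⟨hi, hlt⟩, rfl, by omega⟩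
  · rintro ⟨k, ⟨hk, hlt⟩, rfl, rfl⟩
    exact ⟨⟨by omega, hlt⟩, hk⟩

lemma filter_isAddable_eq_image (hAdd : ∀ x, x ∈ Add ↔ IsAddable ν x) :
    Add.filter (fun a => a.1 < n) = (blockStarts ν.rowLen n).image fun i => (i, ν.rowLen i) := by
  ext ⟨i, j⟩
  simp only [mem_filter, hAdd, isAddable_iff_rowLen, blockStarts, mem_image, mem_range,
    Prod.mk.injEq]
  constructor
  · rintro ⟨⟨rfl, hstart⟩, hi⟩
    exact ⟨i, ⟨hi, hstart⟩, rfl, rfl⟩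
  · rintro ⟨k, ⟨hk, hstart⟩, rfl, rfl⟩
    exact ⟨⟨rfl, hstart⟩, hk⟩

end YoungDiagram

open YoungDiagram in
lemma prod_col_addable {ν μ : YoungDiagram} {α β : ℕ} (hc : IsAddable ν (α, β))
    (hμ : μ.cells = insert (α, β) ν.cells) :
    ∏ s ∈ ν.cells.filter (fun s => s.2 = β),
        (t ^ leg ν s - q ^ (arm ν s + 1)) / (t ^ leg μ s - q ^ (arm μ s + 1)) =
      ∏ i ∈ range α,
        t⁻¹ * ((w (α, β) - w (i + 1, ν.rowLen i)) / (w (α, β) - w (i, ν.rowLen i))) := by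
  have hcol := colLen_eq_of_isAddable ν hc
  rw [show ν.cells.filter (fun s => s.2 = β) = ν.col β from rfl, col_eq_prod, hcol, prod_product]
  refine prod_congr rfl fun i hi => ?_
  have hi := mem_range.mp hi
  rw [prod_singleton, leg_eq, leg_eq, arm_eq, arm_eq, hcol, colLen_of_cells_eq_insert hμ hc,
    rowLen_of_cells_eq_insert hμ hi.ne]
  obtain ⟨k, rfl⟩ : ∃ k, α = i + k + 1 := ⟨α - i - 1, by omega⟩
  obtain ⟨e, he⟩ : ∃ e, ν.rowLen i = β + e + 1 :=
    ⟨ν.rowLen i - β - 1, by have := mem_iff_lt_rowLen.mp (mem_iff_lt_colLen.mpr (hcol ▸ hi)); omega⟩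
  rw [he, show i + k + 1 - (i + 1) = k by omega, show i + k + 1 + 1 - (i + 1) = k + 1 by omega,
    show β + e + 1 - (β + 1) = e by omega]
  exact column_factor i β k e

open YoungDiagram in
/-- the column-product part of the Pieri coefficient `d_{μν}` in terms of the
corners of `ν` with row index strictly less than that of the added cell. -/
theorem stmt_4 (ν : YoungDiagram) (Rem Add : Finset (ℕ × ℕ))
    (hRem : ∀ x, x ∈ Rem ↔ IsRemovable ν x)
    (hAdd : ∀ x, x ∈ Add ↔ IsAddable ν x)
    (α β : ℕ) (hc : IsAddable ν (α, β))
    (μ : YoungDiagram) (hμ : μ.cells = insert (α, β) ν.cells) :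
    (Rem.filter fun r => r.1 < α).card = (Add.filter fun a => a.1 < α).card ∧
    (∏ s ∈ ν.cells.filter (fun s => s.2 = β),
        (t ^ leg ν s - q ^ (arm ν s + 1)) / (t ^ leg μ s - q ^ (arm μ s + 1))) =
      (t ^ α)⁻¹ *
        (∏ r ∈ Rem.filter (fun r => r.1 < α), (w (α, β) - q * t * w r)) /
        (∏ a ∈ Add.filter (fun a => a.1 < α), (w (α, β) - w a)) := by
  have hlast : ∀ i < α, ν.rowLen α < ν.rowLen i := fun i hi =>
    ((isAddable_iff_rowLen ν α β).mp hc).1 ▸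
      mem_iff_lt_rowLen.mp (mem_iff_lt_colLen.mpr (colLen_eq_of_isAddable ν hc ▸ hi))
  have hD : ∀ i ∈ range α, w (α, β) - w (i, ν.rowLen i) ≠ 0 := fun i hi =>
    sub_ne_zero.mpr (w_injective.ne (by simp [(mem_range.mp hi).ne']))
  have hfst {g : ℕ → ℕ} : Function.Injective fun i => (i, g i) := fun _ _ h => congrArg Prod.fst h
  rw [filter_isRemovable_eq_image ν α hRem, filter_isAddable_eq_image ν α hAdd,
    card_image_of_injective _ hfst, card_image_of_injective _ hfst,
    prod_image hfst.injOn, prod_image hfst.injOn]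
  refine ⟨card_blockEnds hlast, ?_⟩
  have hE : ∏ i ∈ blockEnds ν.rowLen α, (w (α, β) - q * t * w (i, ν.rowLen i - 1)) =
      ∏ i ∈ blockEnds ν.rowLen α, (w (α, β) - w (i + 1, ν.rowLen i)) :=
    prod_congr rfl fun i hi => by
      rw [q_mul_t_mul_w, Nat.sub_add_cancel (Nat.one_le_of_lt (mem_filter.mp hi).2)]
  rw [prod_col_addable hc hμ, prod_mul_distrib, prod_const, card_range, prod_div_distrib, inv_pow,
    mul_div_assoc, hE]
  congr 1
  have hS : ∏ i ∈ blockStarts ν.rowLen α, (w (α, β) - w (i, ν.rowLen i)) ≠ 0 :=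
    prod_ne_zero_iff.mpr fun i hi => hD i (filter_subset _ _ hi)
  rw [div_eq_div_iff (prod_ne_zero_iff.mpr hD) hS]
  exact (prod_mul_prod_blockStarts (fun _ _ h => ν.rowLen_anti _ _ h) hlast
    fun i hi => by rw [hi]).trans (mul_comm _ _)
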